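/- arXiv:2303.16700 — 2 statements merged into one kernel-verified Lean document; each statement's English description precedes it below -/
import Mathlib

section
/- If P is a set of 5 points in general position in the plane, then the disjointness graph D(P) is not Hamiltonian. -/
noncomputable section

/-- Points of the plane. -/
abbrev Pl := ℝ × ℝ

/-- `P` is in general position: no three (distinct) points of `P` are collinear. -/
def GenPos (P : Set Pl) : Prop :=
  ∀ a ∈ P, ∀ b ∈ P, ∀ c ∈ P, a ≠ b → a ≠ c → b ≠ c →
    ¬ Collinear ℝ ({a, b, c} : Set Pl)

/-- The set of all closed straight-line segments with (distinct) endpoints in `P`. -/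
def Segs (P : Set Pl) : Set (Set Pl) :=
  {s | ∃ a ∈ P, ∃ b ∈ P, a ≠ b ∧ s = segment ℝ a b}

/-- The edge disjointness graph of `P`: vertices are the segments of `P`,
two of them adjacent iff they are disjoint. -/
def DisjGraph (P : Set Pl) : SimpleGraph ↥(Segs P) where
  Adj s t := Disjoint (s : Set Pl) (t : Set Pl)
  symm := ⟨fun _ _ h => h.symm⟩
  loopless := by
    refine ⟨?_⟩
    rintro ⟨s, a, ha, b, hb, hab, rfl⟩ h
    exact (Set.not_disjoint_iff.2
      ⟨a, left_mem_segment ℝ a b, left_mem_segment ℝ a b⟩) h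

/-- An independent set of vertices: pairwise non-adjacent. -/
def IsIndepSet {V : Type*} (G : SimpleGraph V) (s : Set V) : Prop :=
  s.Pairwise fun a b => ¬ G.Adj a b

/-- Twice the signed area of the triangle `a b c`; its sign is the orientation. -/
def det3 (a b c : Pl) : ℝ :=
  (b.1 - a.1) * (c.2 - a.2) - (b.2 - a.2) * (c.1 - a.1)

/-- `p 0, …, p (n-1)` are in convex position, appearing in this
(counterclockwise) cyclic order on their convex hull. -/
def ConvexCyclic {n : ℕ} (p : Fin n → Pl) : Prop :=
  ∀ i j k : Fin n, i < j → j < k → 0 < det3 (p i) (p j) (p k)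

/-- `P` is in convex position: every point of `P` is a vertex of the convex hull. -/
def ConvexPos (P : Set Pl) : Prop :=
  ∀ x ∈ P, x ∉ convexHull ℝ (P \ {x})

/-- `P` and `Q` have the same order type. -/
def SameOrderType (P Q : Set Pl) : Prop :=
  ∃ γ : Pl → Pl, Set.BijOn γ P Q ∧
    ∀ a ∈ P, ∀ b ∈ P, ∀ c ∈ P,
      Real.sign (det3 a b c) = Real.sign (det3 (γ a) (γ b) (γ c))

/-- A thrackle of `P`: a set of segments of `P`, any two of which intersect. -/
def IsThrackle (P : Set Pl) (T : Set (Set Pl)) : Prop :=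
  T ⊆ Segs P ∧ ∀ s ∈ T, ∀ t ∈ T, s ≠ t → ¬ Disjoint s t

end

/-!
In general position the only points of `P` on a segment of `P` are its two endpoints, so sending
a segment to its endpoint pair is a bijection from the segments of `P` onto the `2`-subsets of `P`,
and disjoint segments go to disjoint pairs. Hence `D(P)` is a spanning subgraph of the Kneser
graph `K(5, 2)`, the Petersen graph, which is not Hamiltonian: an exhaustive search shows that no
Hamiltonian path ending at a fixed vertex starts at a neighbour of it.
-/

open Function

namespace SimpleGraph

def kneserGraph (V : Type*) (k : ℕ) : SimpleGraph {s : Finset V // s.card = k} where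
  Adj s t := s ≠ t ∧ Disjoint s.1 t.1
  symm := ⟨fun _ _ h => ⟨h.1.symm, h.2.symm⟩⟩
  loopless := ⟨fun _ h => h.1 rfl⟩

instance {V : Type*} [DecidableEq V] (k : ℕ) : DecidableRel (kneserGraph V k).Adj :=
  fun s t => inferInstanceAs (Decidable (s ≠ t ∧ Disjoint s.1 t.1))

def kneserGraph.congr {V W : Type*} (e : V ≃ W) (k : ℕ) : kneserGraph V k ≃g kneserGraph W k where
  toEquiv := e.finsetCongr.subtypeEquiv fun s => by simp
  map_rel_iff' := by
    simp [kneserGraph, Subtype.ext_iff, Equiv.finsetCongr_apply, Finset.disjoint_map]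

theorem IsHamiltonian.map {V W : Type*} [Fintype V] [DecidableEq V] [Fintype W] [DecidableEq W]
    {G : SimpleGraph V} {H : SimpleGraph W} (f : G →g H) (hf : Bijective f)
    (hG : G.IsHamiltonian) : H.IsHamiltonian := fun hW =>
  let ⟨_, p, hp⟩ := hG (Fintype.card_of_bijective hf ▸ hW)
  ⟨_, p.map f, hp.map hf⟩

section PathSearch

variable {V : Type*} [Fintype V] [DecidableEq V] (G : SimpleGraph V) [DecidableRel G.Adj]

def pathsTo (v : V) : ℕ → Multiset (List V)
  | 0 => {[v]}
  | k + 1 => (pathsTo v k).bind fun l =>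
      (Finset.univ.val.filter fun w => G.Adj w (l.headD v) ∧ w ∉ l).map (· :: l)

theorem support_mem_pathsTo {u v : V} (p : G.Walk u v) (hp : p.IsPath) :
    p.support ∈ G.pathsTo v p.length := by
  induction p with
  | nil => simp [pathsTo]
  | cons h q ih =>
    rw [Walk.cons_isPath_iff] at hp
    simp only [Walk.support_cons, Walk.length_cons, pathsTo, Multiset.mem_bind]
    refine ⟨q.support, ih hp.1, Multiset.mem_map.2 ⟨_, Multiset.mem_filter.2
      ⟨Finset.mem_univ _, ?_, hp.2⟩, rfl⟩⟩
    rw [← Walk.cons_tail_support q]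
    exact h

/-- The tail of a Hamiltonian cycle based at `v` is a Hamiltonian path ending at `v` whose first
vertex is adjacent to `v`. -/
theorem not_isHamiltonian_of_forall_pathsTo [Nontrivial V] (v : V)
    (h : ∀ l ∈ G.pathsTo v (Fintype.card V - 1), ¬ G.Adj v (l.headD v)) :
    ¬ G.IsHamiltonian := by
  intro hG
  obtain ⟨p, hp⟩ := hG.exists_isHamiltonianCycle v
  have hq := hp.isHamiltonian_tail
  refine h _ (hq.length_eq ▸ G.support_mem_pathsTo _ hq.isPath) ?_
  rw [← Walk.cons_tail_support p.tail]
  exact p.adj_snd hp.not_nil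

end PathSearch

theorem not_isHamiltonian_kneserGraph_five_two : ¬ (kneserGraph (Fin 5) 2).IsHamiltonian := by
  have : Nontrivial {s : Finset (Fin 5) // s.card = 2} :=
    nontrivial_of_ne ⟨{0, 1}, rfl⟩ ⟨{0, 2}, rfl⟩ (by decide)
  exact not_isHamiltonian_of_forall_pathsTo _ ⟨{0, 1}, rfl⟩ (by decide +kernel)

end SimpleGraph

open SimpleGraph

theorem GenPos.eq_or_eq_of_mem_segment {P : Set Pl} (hgp : GenPos P) {a b x : Pl}
    (ha : a ∈ P) (hb : b ∈ P) (hx : x ∈ P) (hab : a ≠ b) (hxs : x ∈ segment ℝ a b) :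
    x = a ∨ x = b := by
  by_contra! h
  refine hgp a ha b hb x hx hab h.1.symm h.2.symm ?_
  rw [Set.pair_comm]
  exact (mem_segment_iff_wbtw.1 hxs).collinear

open Classical in
noncomputable def pointsOn (P : Set Pl) [Fintype P] (s : Set Pl) : Finset P :=
  Finset.univ.filter fun x => (x : Pl) ∈ s

section SegmentEndpoints

variable {P : Set Pl} [Fintype P]

theorem pointsOn_segment (hgp : GenPos P) {a b : Pl} (ha : a ∈ P) (hb : b ∈ P) (hab : a ≠ b) :
    pointsOn P (segment ℝ a b) = {⟨a, ha⟩, ⟨b, hb⟩} := by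
  ext ⟨x, hx⟩
  simp only [pointsOn, Finset.mem_filter, Finset.mem_univ, true_and, Finset.mem_insert,
    Finset.mem_singleton, Subtype.mk.injEq]
  refine ⟨hgp.eq_or_eq_of_mem_segment ha hb hx hab, ?_⟩
  rintro (rfl | rfl)
  exacts [left_mem_segment ℝ _ _, right_mem_segment ℝ _ _]

theorem card_pointsOn (hgp : GenPos P) {s : Set Pl} (hs : s ∈ Segs P) :
    (pointsOn P s).card = 2 := by
  obtain ⟨a, ha, b, hb, hab, rfl⟩ := hs
  rw [pointsOn_segment hgp ha hb hab, Finset.card_pair (by simpa using hab)]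

theorem convexHull_pointsOn (hgp : GenPos P) {s : Set Pl} (hs : s ∈ Segs P) :
    convexHull ℝ (Subtype.val '' (pointsOn P s : Set P)) = s := by
  obtain ⟨a, ha, b, hb, hab, rfl⟩ := hs
  simp [pointsOn_segment hgp ha hb hab, Set.image_insert_eq, convexHull_pair]

noncomputable def segmentHom (hgp : GenPos P) : DisjGraph P →g kneserGraph P 2 where
  toFun s := ⟨pointsOn P s, card_pointsOn hgp s.2⟩
  map_rel' {s t} hst := by
    have hdisj : Disjoint (pointsOn P s) (pointsOn P t) := by
      refine Finset.disjoint_left.2 fun x hxs hxt => ?_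
      simp only [pointsOn, Finset.mem_filter, Finset.mem_univ, true_and] at hxs hxt
      exact Set.disjoint_left.1 hst hxs hxt
    refine ⟨fun heq => ?_, hdisj⟩
    rw [← show pointsOn P s = pointsOn P t from congrArg Subtype.val heq,
      disjoint_self] at hdisj
    simpa [hdisj] using card_pointsOn hgp s.2

theorem segmentHom_bijective (hgp : GenPos P) : Bijective (segmentHom hgp) := by
  refine ⟨fun s t hst => Subtype.ext ?_, fun ⟨S, hS⟩ => ?_⟩
  · rw [← convexHull_pointsOn hgp s.2, ← convexHull_pointsOn hgp t.2,
      show pointsOn P s = pointsOn P t from congrArg Subtype.val hst]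
  · obtain ⟨x, y, hxy, rfl⟩ := Finset.card_eq_two.1 hS
    have hxy' : (x : Pl) ≠ y := Subtype.coe_injective.ne hxy
    refine ⟨⟨segment ℝ x y, x, x.2, y, y.2, hxy', rfl⟩, Subtype.ext ?_⟩
    exact pointsOn_segment hgp x.2 y.2 hxy'

end SegmentEndpoints

/-- for 5 points in general position, `D(P)` is not hamiltonian. -/
theorem stmt_9 (P : Finset Pl) (h5 : P.card = 5) (hgp : GenPos ↑P)
    [Fintype ↥(Segs (↑P : Set Pl))] [DecidableEq ↥(Segs (↑P : Set Pl))] :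
    ¬ (DisjGraph ↑P).IsHamiltonian := by
  let e : kneserGraph (↑P : Set Pl) 2 ≃g kneserGraph (Fin 5) 2 :=
    kneserGraph.congr (P.equivFinOfCardEq h5) 2
  intro hD
  exact not_isHamiltonian_kneserGraph_five_two <|
    hD.map (e.toHom.comp (segmentHom hgp)) (e.bijective.comp (segmentHom_bijective hgp))
end

section
/- Let P be 5 points in general position in the plane, let Q = {p₁,p₂,p₃,p₄} ⊆ P be in convex position in this cyclic order, and let p₅ be the remaining point. Then in D(P), the neighborhood of the diagonal p₁p₃ is a subset of {p₂p₅, p₄p₅}, and the neighborhood of the diagonal p₂p₄ is a subset of {p₁p₅, p₃p₅}. -/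
/-- The point where the diagonals meet splits each of them in the ratio of two triangle areas. -/
lemma not_disjoint_segment_of_det3_pos {a b c d : Pl} (habc : 0 < det3 a b c)
    (habd : 0 < det3 a b d) (hacd : 0 < det3 a c d) (hbcd : 0 < det3 b c d) :
    ¬ Disjoint (segment ℝ a c) (segment ℝ b d) := by
  set S : ℝ := det3 a c d + det3 a b c with hS
  have hS_pos : 0 < S := by positivity
  have hS_eq : S = det3 a b d + det3 b c d := by simp only [hS, det3]; ring
  have hmeet : (det3 b c d / S) • a + (det3 a b d / S) • c
      = (det3 a c d / S) • b + (det3 a b c / S) • d := by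
    apply Prod.ext <;>
      · simp only [Prod.fst_add, Prod.snd_add, Prod.smul_fst, Prod.smul_snd, smul_eq_mul,
          hS, det3]
        field_simp
        ring
  refine Set.not_disjoint_iff.2 ⟨(det3 b c d / S) • a + (det3 a b d / S) • c, ?_, ?_⟩
  · exact ⟨det3 b c d / S, det3 a b d / S, by positivity, by positivity,
      by rw [← add_div, add_comm, ← hS_eq, div_self hS_pos.ne'], rfl⟩
  · exact ⟨det3 a c d / S, det3 a b c / S, by positivity, by positivity,
      by rw [← add_div, div_self hS_pos.ne'], hmeet.symm⟩

lemma ConvexCyclic.not_disjoint_diagonals {a b c d : Pl} (hcc : ConvexCyclic ![a, b, c, d]) :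
    ¬ Disjoint (segment ℝ a c) (segment ℝ b d) :=
  not_disjoint_segment_of_det3_pos (by simpa using hcc 0 1 2 (by decide) (by decide))
    (by simpa using hcc 0 1 3 (by decide) (by decide))
    (by simpa using hcc 0 2 3 (by decide) (by decide))
    (by simpa using hcc 1 2 3 (by decide) (by decide))

lemma segment_eq_of_disjoint_of_not_disjoint {p q r s e x y : Pl}
    (hx : x ∈ ({p, r, q, s, e} : Set Pl)) (hy : y ∈ ({p, r, q, s, e} : Set Pl)) (hxy : x ≠ y)
    (hcross : ¬ Disjoint (segment ℝ p q) (segment ℝ r s))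
    (hdisj : Disjoint (segment ℝ p q) (segment ℝ x y)) :
    segment ℝ x y = segment ℝ r e ∨ segment ℝ x y = segment ℝ s e := by
  have hp : p ∈ segment ℝ p q := left_mem_segment ℝ p q
  have hq : q ∈ segment ℝ p q := right_mem_segment ℝ p q
  have hcross' : ¬ Disjoint (segment ℝ p q) (segment ℝ s r) := by rwa [segment_symm ℝ s r]
  have hx_out : x ∉ segment ℝ p q := Set.disjoint_right.1 hdisj (left_mem_segment ℝ x y)
  have hy_out : y ∉ segment ℝ p q := Set.disjoint_right.1 hdisj (right_mem_segment ℝ x y)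
  have hx' : x = r ∨ x = s ∨ x = e := by
    rcases hx with rfl | rfl | rfl | hx
    exacts [absurd hp hx_out, .inl rfl, absurd hq hx_out, .inr hx]
  have hy' : y = r ∨ y = s ∨ y = e := by
    rcases hy with rfl | rfl | rfl | hy
    exacts [absurd hp hy_out, .inl rfl, absurd hq hy_out, .inr hy]
  rcases hx' with rfl | rfl | rfl <;> rcases hy' with rfl | rfl | rfl
  all_goals first
    | exact absurd rfl hxy
    | exact absurd hdisj hcross
    | exact absurd hdisj hcross'
    | exact .inl rfl
    | exact .inr rfl
    | exact .inl (segment_symm ℝ _ _)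
    | exact .inr (segment_symm ℝ _ _)

lemma DisjGraph.adj_eq_segment {P : Set Pl} {p q r s e : Pl} (hP : P ⊆ {p, r, q, s, e})
    (hcross : ¬ Disjoint (segment ℝ p q) (segment ℝ r s)) {σ τ : ↥(Segs P)}
    (hσ : σ.val = segment ℝ p q) (hadj : (DisjGraph P).Adj σ τ) :
    τ.val = segment ℝ r e ∨ τ.val = segment ℝ s e := by
  obtain ⟨τ, x, hx, y, hy, hxy, rfl⟩ := τ
  have hdisj : Disjoint (segment ℝ p q) (segment ℝ x y) := hσ ▸ hadj
  exact segment_eq_of_disjoint_of_not_disjoint (hP hx) (hP hy) hxy hcross hdisj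

theorem stmt_14_general (a b c d e : Pl) (P : Set Pl) (hP : P = {a, b, c, d, e})
    (hcc : ConvexCyclic ![a, b, c, d]) :
    (∀ s t : ↥(Segs P), s.val = segment ℝ a c → (DisjGraph P).Adj s t →
      (t.val = segment ℝ b e ∨ t.val = segment ℝ d e)) ∧
    (∀ s t : ↥(Segs P), s.val = segment ℝ b d → (DisjGraph P).Adj s t →
      (t.val = segment ℝ a e ∨ t.val = segment ℝ c e)) := by
  have hcross := hcc.not_disjoint_diagonals
  have hP' : P ⊆ {b, a, d, c, e} := by
    intro x hx
    simp only [hP, Set.mem_insert_iff, Set.mem_singleton_iff] at hx ⊢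
    tauto
  exact ⟨fun _ _ => DisjGraph.adj_eq_segment hP.subset hcross,
    fun _ _ => DisjGraph.adj_eq_segment hP' (fun h => hcross h.symm)⟩

/-- with `Q = {a,b,c,d}` convex in this cyclic order and `e` the
fifth point, the neighborhood of `ac` in `D(P)` is contained in `{be, de}`, and
that of `bd` in `{ae, ce}`. -/
theorem stmt_14 (a b c d e : Pl) (P : Set Pl) (hP : P = {a, b, c, d, e})
    (hcard : P.ncard = 5) (hgp : GenPos P) (hcc : ConvexCyclic ![a, b, c, d]) :
    (∀ s t : ↥(Segs P), s.val = segment ℝ a c → (DisjGraph P).Adj s t →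
      (t.val = segment ℝ b e ∨ t.val = segment ℝ d e)) ∧
    (∀ s t : ↥(Segs P), s.val = segment ℝ b d → (DisjGraph P).Adj s t →
      (t.val = segment ℝ a e ∨ t.val = segment ℝ c e)) :=
  stmt_14_general a b c d e P hP hcc
end
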